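/- arXiv:1405.1827 — 9 statements merged into one kernel-verified Lean document; each statement's English description precedes it below -/
import Mathlib

section
/- An n×n real matrix M is a P-matrix (all principal minors positive) if and only if for every nonzero vector x ∈ ℝⁿ there exists an index j with x_j · (Mx)_j > 0. -/
open Matrix

/-- A square real matrix is a P-matrix if all of its principal minors are positive. -/
def IsPMat {n : ℕ} (M : Matrix (Fin n) (Fin n) ℝ) : Prop :=
  ∀ S : Finset (Fin n),
    0 < (M.submatrix (Subtype.val : {i // i ∈ S} → Fin n) Subtype.val).det

/-!
Expanding the determinant row by row gives
`det (A + diagonal d) = ∑ s, (∏ i ∉ s, d i) * det A[s]`, so adding a nonnegative diagonal to a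
matrix with positive principal minors keeps its determinant positive. If a nonzero `x` had
`x j * (A x) j ≤ 0` for every `j`, then on the support `S` of `x` the vector `x` would be a null
vector of `A[S] + diagonal d` with `d j = -(A x) j / x j ≥ 0`, a contradiction.

Conversely, sign non-reversal passes to principal submatrices and to every convex combination
`(1 - t) • 1 + t • A`, which are therefore nonsingular; by continuity `det A` has the sign of
`det 1 = 1`.
-/

open Finset

namespace Matrix

variable {m ι R : Type*}

def PosPrincipalMinors [DecidableEq m] [CommRing R] [PartialOrder R] (A : Matrix m m R) : Prop :=
  ∀ S : Finset m, 0 < (A.submatrix (Subtype.val : S → m) Subtype.val).det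

def NoSignReversal [Fintype m] [Semiring R] [Preorder R] (A : Matrix m m R) : Prop :=
  ∀ x : m → R, x ≠ 0 → ∃ j, 0 < x j * (A *ᵥ x) j

theorem det_submatrix_embedding [DecidableEq m] [CommRing R] [Fintype ι] [DecidableEq ι]
    (A : Matrix m m R) (e : ι ↪ m) :
    (A.submatrix e e).det = (A.submatrix (Subtype.val : univ.map e → m) Subtype.val).det := by
  let φ : ι ≃ univ.map e := (Equiv.ofInjective e e.injective).trans
    (Equiv.subtypeEquivRight fun i => by simp)
  exact det_submatrix_equiv_self φ (A.submatrix (Subtype.val : univ.map e → m) Subtype.val)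

theorem det_add_diagonal [Fintype m] [DecidableEq m] [CommRing R] (A : Matrix m m R)
    (d : m → R) :
    (A + diagonal d).det =
      ∑ s : Finset m, (∏ i ∈ sᶜ, d i) * (A.submatrix (Subtype.val : s → m) Subtype.val).det := by
  have hsplit : ∀ s : Finset m, of (s.piecewise A.row (diagonal d).row) =
      diagonal (s.piecewise 1 d) * of (s.piecewise A.row (1 : Matrix m m R).row) := by
    intro s; ext i j
    by_cases hi : i ∈ s <;> simp [Finset.piecewise, hi, row, diagonal_apply, one_apply]
  calc (A + diagonal d).det
      = ∑ s : Finset m, det (of (s.piecewise A.row (diagonal d).row)) :=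
        detRowAlternating.map_add_univ A.row (diagonal d).row
    _ = _ := by
        refine sum_congr rfl fun s _ => ?_
        rw [hsplit, det_mul, det_diagonal, det_piecewise_one_eq_submatrix_det, prod_piecewise]
        simp [compl_eq_univ_sdiff]

theorem mulVec_submatrix_subtype_val [Fintype m] [NonUnitalNonAssocSemiring R]
    (A : Matrix m m R) (S : Finset m) {x : m → R} (hx : ∀ i ∉ S, x i = 0) (j : S) :
    (A.submatrix (Subtype.val : S → m) Subtype.val *ᵥ fun i : S => x i) j = (A *ᵥ x) j := by
  simp only [mulVec, dotProduct, submatrix_apply]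
  rw [sum_coe_sort S fun k => A j k * x k]
  exact sum_subset (subset_univ S) fun k _ hk => by rw [hx k hk, mul_zero]

namespace PosPrincipalMinors

variable [DecidableEq m] [CommRing R] [PartialOrder R] {A : Matrix m m R}

theorem submatrix [Fintype ι] [DecidableEq ι] (hA : A.PosPrincipalMinors) (e : ι ↪ m) :
    (A.submatrix e e).PosPrincipalMinors := fun T => by
  rw [submatrix_submatrix]
  exact (hA _).trans_eq (det_submatrix_embedding A ((Function.Embedding.subtype _).trans e)).symm

theorem det_add_diagonal_pos [Fintype m] [IsOrderedRing R] (hA : A.PosPrincipalMinors)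
    {d : m → R} (hd : 0 ≤ d) : 0 < (A + diagonal d).det := by
  rw [det_add_diagonal]
  refine sum_pos' (fun s _ => mul_nonneg (prod_nonneg fun i _ => hd i) (hA s).le)
    ⟨univ, mem_univ _, ?_⟩
  simpa using hA univ

theorem exists_pos_of_forall_ne_zero [Fintype m] [Nonempty m] {K : Type*} [Field K]
    [LinearOrder K] [IsStrictOrderedRing K] {A : Matrix m m K} (hA : A.PosPrincipalMinors)
    {y : m → K} (hy : ∀ j, y j ≠ 0) : ∃ j, 0 < y j * (A *ᵥ y) j := by
  by_contra! h
  obtain ⟨d, hdy⟩ : ∃ d : m → K, ∀ j, d j * y j = -(A *ᵥ y) j :=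
    ⟨fun j => -(A *ᵥ y) j / y j, fun j => div_mul_cancel₀ _ (hy j)⟩
  have hd : 0 ≤ d := fun j => by
    refine nonneg_of_mul_nonneg_left (b := y j * y j) ?_ (mul_self_pos.2 (hy j))
    rw [← mul_assoc, hdy, neg_mul, neg_nonneg, mul_comm]
    exact h j
  have hnull : (A + diagonal d) *ᵥ y = 0 := funext fun j => by
    simp [add_mulVec, mulVec_diagonal, hdy]
  refine (hA.det_add_diagonal_pos hd).ne' (exists_mulVec_eq_zero_iff.1 ⟨y, ?_, hnull⟩)
  exact fun h0 => hy (Classical.arbitrary m) (congrFun h0 _)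

theorem noSignReversal [Fintype m] {K : Type*} [Field K] [LinearOrder K] [IsStrictOrderedRing K]
    {A : Matrix m m K} (hA : A.PosPrincipalMinors) : A.NoSignReversal := by
  intro x hx
  let S := univ.filter (x · ≠ 0)
  have hxS : ∀ i ∉ S, x i = 0 := by simp [S]
  obtain ⟨i, hi⟩ := Function.ne_iff.1 hx
  have : Nonempty S := ⟨⟨i, by simpa [S] using hi⟩⟩
  have hAS : (A.submatrix (Subtype.val : S → m) Subtype.val).PosPrincipalMinors :=
    hA.submatrix (Function.Embedding.subtype _)
  obtain ⟨j, hj⟩ := hAS.exists_pos_of_forall_ne_zero (y := fun i : S => x i)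
    fun j => (mem_filter.1 j.2).2
  rw [mulVec_submatrix_subtype_val A S hxS] at hj
  exact ⟨j, hj⟩

end PosPrincipalMinors

namespace NoSignReversal

variable [Fintype m]

theorem submatrix [Semiring R] [Preorder R] {A : Matrix m m R}
    (hA : A.NoSignReversal) (S : Finset m) :
    (A.submatrix (Subtype.val : S → m) Subtype.val).NoSignReversal := by
  classical
  intro y hy
  let x : m → R := fun i => if hi : i ∈ S then y ⟨i, hi⟩ else 0
  have hx : ∀ i ∉ S, x i = 0 := fun i hi => dif_neg hi
  have hxy : (fun i : S => x i) = y := funext fun i => dif_pos i.2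
  have hx0 : x ≠ 0 := fun h => hy (by rw [← hxy, h]; rfl)
  obtain ⟨j, hj⟩ := hA x hx0
  have hjS : j ∈ S := by
    by_contra hjS
    simp [hx j hjS] at hj
  refine ⟨⟨j, hjS⟩, ?_⟩
  rw [← hxy, mulVec_submatrix_subtype_val A S hx]
  exact hj

theorem det_ne_zero [DecidableEq m] [CommRing R] [IsDomain R] [Preorder R]
    {A : Matrix m m R} (hA : A.NoSignReversal) : A.det ≠ 0 := fun h => by
  obtain ⟨v, hv, hAv⟩ := exists_mulVec_eq_zero_iff.2 h
  obtain ⟨j, hj⟩ := hA v hv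
  simp [hAv] at hj

theorem one_sub_smul_one_add_smul [DecidableEq m] [CommRing R] [LinearOrder R]
    [IsStrictOrderedRing R] {A : Matrix m m R} (hA : A.NoSignReversal) {t : R}
    (ht : t ∈ Set.Icc 0 1) :
    ((1 - t) • (1 : Matrix m m R) + t • A).NoSignReversal := by
  intro x hx
  obtain ⟨j, hj⟩ := hA x hx
  have hxj : x j ≠ 0 := by rintro h; simp [h] at hj
  refine ⟨j, ?_⟩
  simp only [add_mulVec, smul_mulVec, one_mulVec, Pi.add_apply, Pi.smul_apply, smul_eq_mul]
  rcases ht.1.eq_or_lt with rfl | htpos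
  · simpa using mul_self_pos.2 hxj
  · nlinarith [mul_pos htpos hj, mul_nonneg (sub_nonneg.2 ht.2) (mul_self_nonneg (x j))]

theorem det_pos [DecidableEq m] {A : Matrix m m ℝ} (hA : A.NoSignReversal) : 0 < A.det := by
  let f : ℝ → ℝ := fun t => ((1 - t) • (1 : Matrix m m ℝ) + t • A).det
  have hf : Continuous f := by fun_prop
  refine lt_of_not_ge fun h => ?_
  obtain ⟨t, ht, hft⟩ := intermediate_value_Icc' zero_le_one hf.continuousOn
    (show (0 : ℝ) ∈ Set.Icc (f 1) (f 0) by simp [f, h])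
  exact (hA.one_sub_smul_one_add_smul ht).det_ne_zero hft

end NoSignReversal

theorem posPrincipalMinors_iff_noSignReversal [Fintype m] [DecidableEq m] {A : Matrix m m ℝ} :
    A.PosPrincipalMinors ↔ A.NoSignReversal :=
  ⟨PosPrincipalMinors.noSignReversal, fun hA S => (hA.submatrix S).det_pos⟩

end Matrix

theorem pMatrix_iff_sign_reversal {n : ℕ} (M : Matrix (Fin n) (Fin n) ℝ) :
    IsPMat M ↔ ∀ x : Fin n → ℝ, x ≠ 0 → ∃ j, 0 < x j * M.mulVec x j :=
  posPrincipalMinors_iff_noSignReversal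
end

section
/- Let M be an n×n Z-matrix that is also a P-matrix (i.e., a K-matrix). Then M is nonsingular and M⁻¹ has all entries nonnegative. -/
open Matrix

/-- A Z-matrix has nonpositive off-diagonal entries. -/
def IsZMat {n : ℕ} (M : Matrix (Fin n) (Fin n) ℝ) : Prop :=
  ∀ i j, i ≠ j → M i j ≤ 0
/-!
Pivot on the last diagonal entry `d > 0` of a K-matrix `M = [A b; c d]`. The Schur complement
`A - b d⁻¹ c` is again a Z-matrix, since it subtracts products of two nonpositive entries, and its
principal minors are those of `M` containing the last index, divided by `d`. By induction its
inverse is nonnegative, and the block-inverse formula expresses `M⁻¹` through it and `d⁻¹`, with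
the nonpositive blocks `b`, `c` occurring only in pairs or under a minus sign.
-/

universe u

namespace Matrix

section Nonneg

variable {R : Type*} [Field R] [LinearOrder R] [IsStrictOrderedRing R]

lemma mul_apply_nonneg {l m n : Type*} [Fintype m] {A : Matrix l m R} {B : Matrix m n R}
    (hA : ∀ i j, 0 ≤ A i j) (hB : ∀ i j, 0 ≤ B i j) : ∀ i j, 0 ≤ (A * B) i j :=
  fun i j => Finset.sum_nonneg fun k _ => mul_nonneg (hA i k) (hB k j)

lemma inv_apply_nonneg_of_subsingleton {m : Type*} [Fintype m] [DecidableEq m] [Subsingleton m]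
    {A : Matrix m m R} (hA : ∀ i, 0 ≤ A i i) : ∀ i j, 0 ≤ A⁻¹ i j := by
  intro i j
  rw [inv_subsingleton, diagonal_apply, Ring.inverse_eq_inv']
  split_ifs
  · exact inv_nonneg.mpr (hA i)
  · exact le_rfl

end Nonneg

section SchurComplement

variable {R : Type*} [Field R] {l m : Type*} [Fintype l] [DecidableEq l]

/-- `A - B D⁻¹ C` for `N = [A B; C D]`. -/
noncomputable def schurComplement (N : Matrix (m ⊕ l) (m ⊕ l) R) : Matrix m m R :=
  N.toBlocks₁₁ - N.toBlocks₁₂ * N.toBlocks₂₂⁻¹ * N.toBlocks₂₁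

variable {N : Matrix (m ⊕ l) (m ⊕ l) R}

lemma schurComplement_submatrix {n : Type*} (f : n → m) :
    (N.submatrix (Sum.map f id) (Sum.map f id)).schurComplement =
      N.schurComplement.submatrix f f := by
  ext i j
  simp [schurComplement, toBlocks₁₁, toBlocks₁₂, toBlocks₂₁, toBlocks₂₂, mul_apply]

lemma det_eq_det_toBlocks₂₂_mul_det_schurComplement [Fintype m] [DecidableEq m]
    (hD : IsUnit N.toBlocks₂₂.det) : N.det = N.toBlocks₂₂.det * N.schurComplement.det := by
  let := N.toBlocks₂₂.invertibleOfIsUnitDet hD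
  conv_lhs => rw [← fromBlocks_toBlocks N]
  rw [det_fromBlocks₂₂, invOf_eq_nonsing_inv]
  rfl

variable [LinearOrder R] [IsStrictOrderedRing R]

lemma schurComplement_apply_nonpos (hA : ∀ i j, i ≠ j → N.toBlocks₁₁ i j ≤ 0)
    (hB : ∀ i j, N.toBlocks₁₂ i j ≤ 0) (hC : ∀ i j, N.toBlocks₂₁ i j ≤ 0)
    (hD : ∀ i j, 0 ≤ N.toBlocks₂₂⁻¹ i j) : ∀ i j, i ≠ j → N.schurComplement i j ≤ 0 := by
  intro i j hij
  have hBDC : 0 ≤ (-N.toBlocks₁₂ * N.toBlocks₂₂⁻¹ * -N.toBlocks₂₁) i j :=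
    mul_apply_nonneg (mul_apply_nonneg (fun i j => neg_nonneg.mpr (hB i j)) hD)
      (fun i j => neg_nonneg.mpr (hC i j)) i j
  simp only [Matrix.neg_mul, Matrix.mul_neg, neg_neg] at hBDC
  rw [schurComplement, sub_apply]
  linarith [hA i j hij]

lemma inv_apply_nonneg_of_schurComplement [Fintype m] [DecidableEq m]
    (hB : ∀ i j, N.toBlocks₁₂ i j ≤ 0) (hC : ∀ i j, N.toBlocks₂₁ i j ≤ 0)
    (hD : IsUnit N.toBlocks₂₂.det) (hS : IsUnit N.schurComplement.det)
    (hDinv : ∀ i j, 0 ≤ N.toBlocks₂₂⁻¹ i j) (hSinv : ∀ i j, 0 ≤ N.schurComplement⁻¹ i j) :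
    ∀ p q, 0 ≤ N⁻¹ p q := by
  set A := N.toBlocks₁₁
  set B := N.toBlocks₁₂
  set C := N.toBlocks₂₁
  set D := N.toBlocks₂₂
  set S := N.schurComplement
  have hB' : ∀ i j, 0 ≤ (-B) i j := fun i j => neg_nonneg.mpr (hB i j)
  have hC' : ∀ i j, 0 ≤ (-C) i j := fun i j => neg_nonneg.mpr (hC i j)
  let := D.invertibleOfIsUnitDet hD
  let : Invertible (A - B * ⅟D * C) := S.invertibleOfIsUnitDet hS |>.copy _ (by
    rw [invOf_eq_nonsing_inv]; rfl)
  let := fromBlocks₂₂Invertible A B C D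
  have hNinv : N⁻¹ = fromBlocks S⁻¹ (S⁻¹ * -B * D⁻¹) (D⁻¹ * -C * S⁻¹)
      (D⁻¹ + D⁻¹ * -C * S⁻¹ * -B * D⁻¹) := by
    rw [← fromBlocks_toBlocks N, ← invOf_eq_nonsing_inv, invOf_fromBlocks₂₂_eq]
    simp only [invOf_eq_nonsing_inv, Matrix.neg_mul, Matrix.mul_neg, neg_neg]
    rfl
  rw [hNinv]
  rintro (i | i) (j | j)
  · exact hSinv i j
  · exact mul_apply_nonneg (mul_apply_nonneg hSinv hB') hDinv i j
  · exact mul_apply_nonneg (mul_apply_nonneg hDinv hC') hSinv i j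
  · exact add_nonneg (hDinv i j) (mul_apply_nonneg (mul_apply_nonneg (mul_apply_nonneg
      (mul_apply_nonneg hDinv hC') hSinv) hB') hDinv i j)

end SchurComplement

section PrincipalMinors

variable {R : Type*} [CommRing R] [PartialOrder R]

/-- Principal submatrices are indexed by embeddings rather than by finsets, which makes the
notion stable under reindexing and passing to submatrices. -/
def HasPosPrincipalMinors {m : Type u} (M : Matrix m m R) : Prop :=
  ∀ (ι : Type u) [Fintype ι] [DecidableEq ι] (f : ι ↪ m), 0 < (M.submatrix f f).det

namespace HasPosPrincipalMinors

variable {m : Type u} {M : Matrix m m R}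

lemma submatrix (hM : M.HasPosPrincipalMinors) {n : Type u} (e : n ↪ m) :
    (M.submatrix e e).HasPosPrincipalMinors :=
  fun ι _ _ f => hM ι (f.trans e)

lemma det_pos [Fintype m] [DecidableEq m] (hM : M.HasPosPrincipalMinors) : 0 < M.det :=
  hM m (Function.Embedding.refl m)

lemma apply_self_pos (hM : M.HasPosPrincipalMinors) (i : m) : 0 < M i i := by
  have h := hM PUnit (Function.Embedding.punit i)
  rwa [det_unique] at h

variable {l : Type u} {N : Matrix (m ⊕ l) (m ⊕ l) R}

lemma toBlocks₂₂ (hN : N.HasPosPrincipalMinors) : N.toBlocks₂₂.HasPosPrincipalMinors :=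
  hN.submatrix .inr

end HasPosPrincipalMinors

end PrincipalMinors

lemma HasPosPrincipalMinors.schurComplement {R : Type*} [Field R] [LinearOrder R]
    [IsStrictOrderedRing R] {l m : Type u} [Fintype l] [DecidableEq l]
    {N : Matrix (m ⊕ l) (m ⊕ l) R} (hN : N.HasPosPrincipalMinors) :
    N.schurComplement.HasPosPrincipalMinors := by
  intro ι _ _ f
  set Nf := N.submatrix (Sum.map f id) (Sum.map f id)
  have hD : 0 < Nf.toBlocks₂₂.det := hN.toBlocks₂₂.det_pos
  have h : 0 < Nf.det := (hN.submatrix (f.sumMap (.refl l))).det_pos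
  rw [det_eq_det_toBlocks₂₂_mul_det_schurComplement hD.ne'.isUnit,
    schurComplement_submatrix] at h
  exact pos_of_mul_pos_right h hD.le

end Matrix

lemma IsPMat.hasPosPrincipalMinors {n : ℕ} {M : Matrix (Fin n) (Fin n) ℝ} (hP : IsPMat M) :
    M.HasPosPrincipalMinors := by
  intro ι _ _ f
  let e : ι ≃ {i // i ∈ Finset.univ.map f} :=
    (Equiv.ofInjective f f.injective).trans (Equiv.subtypeEquivRight (by simp))
  rw [show M.submatrix f f = (M.submatrix Subtype.val Subtype.val).submatrix e e from rfl,
    det_submatrix_equiv_self]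
  exact hP _

theorem IsZMat.inv_apply_nonneg {n : ℕ} {M : Matrix (Fin n) (Fin n) ℝ} (hZ : IsZMat M)
    (hP : M.HasPosPrincipalMinors) : ∀ i j, 0 ≤ M⁻¹ i j := by
  induction n with
  | zero => exact fun i => i.elim0
  | succ n ih =>
    let e : Fin n ⊕ Fin 1 ≃ Fin (n + 1) := finSumFinEquiv
    set N := M.submatrix e e
    have hZN : ∀ p q, p ≠ q → N p q ≤ 0 := fun p q h => hZ _ _ (e.injective.ne h)
    have hPN : N.HasPosPrincipalMinors := hP.submatrix e.toEmbedding
    have hB : ∀ i j, N.toBlocks₁₂ i j ≤ 0 := fun i j => hZN _ _ Sum.inl_ne_inr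
    have hC : ∀ i j, N.toBlocks₂₁ i j ≤ 0 := fun i j => hZN _ _ Sum.inr_ne_inl
    have hDinv : ∀ i j, 0 ≤ N.toBlocks₂₂⁻¹ i j :=
      inv_apply_nonneg_of_subsingleton fun i => (hPN.toBlocks₂₂.apply_self_pos i).le
    have hSinv : ∀ i j, 0 ≤ N.schurComplement⁻¹ i j :=
      ih (schurComplement_apply_nonpos (fun i j h => hZN _ _ (Sum.inl_injective.ne h)) hB hC
        hDinv) hPN.schurComplement
    have hNinv : ∀ p q, 0 ≤ N⁻¹ p q :=
      inv_apply_nonneg_of_schurComplement hB hC hPN.toBlocks₂₂.det_pos.ne'.isUnit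
        hPN.schurComplement.det_pos.ne'.isUnit hDinv hSinv
    intro i j
    simpa [N, inv_submatrix_equiv] using hNinv (e.symm i) (e.symm j)

theorem kMatrix_inverse_nonneg {n : ℕ} (M : Matrix (Fin n) (Fin n) ℝ)
    (hZ : IsZMat M) (hP : IsPMat M) :
    IsUnit M.det ∧ ∀ i j, 0 ≤ M⁻¹ i j :=
  ⟨hP.hasPosPrincipalMinors.det_pos.ne'.isUnit, hZ.inv_apply_nonneg hP.hasPosPrincipalMinors⟩
end

section
/- Every K-matrix M ∈ ℝ^{n×n} admits positive diagonal matrices L and H such that LMH = I − γS for some γ ∈ [0,1) and some entrywise nonnegative row-stochastic matrix S (i.e., S ≥ 0 and S𝟙 = 𝟙). -/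
open Matrix

lemma pmat_emb {n : ℕ} {M : Matrix (Fin n) (Fin n) ℝ} (hP : IsPMat M)
    {k : ℕ} (e : Fin k → Fin n) (he : Function.Injective e) :
    0 < (M.submatrix e e).det := by
  classical
  set S : Finset (Fin n) := Finset.image e Finset.univ with hS
  have hmem : ∀ i, e i ∈ S := fun i => Finset.mem_image_of_mem e (Finset.mem_univ i)
  have hbij : Function.Bijective (fun i : Fin k => (⟨e i, hmem i⟩ : {i // i ∈ S})) := by
    constructor
    · intro a b hab
      exact he (congrArg Subtype.val hab)
    · rintro ⟨x, hx⟩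
      obtain ⟨i, _, hi⟩ := Finset.mem_image.mp hx
      exact ⟨i, by simp [hi]⟩
  set eqv := Equiv.ofBijective _ hbij
  have : (M.submatrix (Subtype.val : {i // i ∈ S} → Fin n) Subtype.val).submatrix eqv eqv
      = M.submatrix e e := rfl
  rw [← this, Matrix.det_submatrix_equiv_self]
  exact hP S

lemma exists_pos_mulVec_pos : ∀ (n : ℕ) (M : Matrix (Fin n) (Fin n) ℝ),
    (∀ i j, i ≠ j → M i j ≤ 0) →
    (∀ (k : ℕ) (e : Fin k → Fin n), Function.Injective e → 0 < (M.submatrix e e).det) →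
    ∃ x : Fin n → ℝ, (∀ i, 0 < x i) ∧ ∀ i, 0 < M.mulVec x i := by
  intro n
  induction n with
  | zero => exact fun M _ _ => ⟨fun _ => 1, fun i => i.elim0, fun i => i.elim0⟩
  | succ n ih =>
    intro M hZ hP
    set d : ℝ := M (Fin.last n) (Fin.last n) with hd_def
    have hd : 0 < d := by
      have h1 := hP 1 (fun _ => Fin.last n) (fun a b _ => Subsingleton.elim a b)
      rwa [Matrix.det_fin_one] at h1
    set A' : Matrix (Fin n) (Fin n) ℝ := Matrix.of fun i j =>
      M i.castSucc j.castSucc - M i.castSucc (Fin.last n) * d⁻¹ * M (Fin.last n) j.castSucc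
      with hA'
    have hA'app : ∀ i j, A' i j =
        M i.castSucc j.castSucc - M i.castSucc (Fin.last n) * d⁻¹ * M (Fin.last n) j.castSucc :=
      fun i j => rfl
    -- A' is a Z-matrix
    have hZ' : ∀ i j, i ≠ j → A' i j ≤ 0 := by
      intro i j hij
      have h1 : M i.castSucc j.castSucc ≤ 0 :=
        hZ _ _ (fun h => hij (Fin.castSucc_injective n h))
      have h2 : M i.castSucc (Fin.last n) ≤ 0 := hZ _ _ (Fin.castSucc_lt_last i).ne
      have h3 : M (Fin.last n) j.castSucc ≤ 0 := hZ _ _ (Fin.castSucc_lt_last j).ne.symm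
      have h4 : 0 < d⁻¹ := inv_pos.mpr hd
      rw [hA'app]
      have h5 : 0 ≤ -(M i.castSucc (Fin.last n) * d⁻¹) * -(M (Fin.last n) j.castSucc) :=
        mul_nonneg (neg_nonneg.2 (mul_nonpos_of_nonpos_of_nonneg h2 h4.le)) (neg_nonneg.2 h3)
      nlinarith [h5]
    -- Schur determinant identity gives P for A'
    have hSchur : ∀ (k : ℕ) (e : Fin k → Fin n), Function.Injective e →
        0 < (A'.submatrix e e).det := by
      intro k e he
      set e' : Fin k ⊕ Fin 1 → Fin (n + 1) :=
        Sum.elim (Fin.castSucc ∘ e) (fun _ => Fin.last n) with he'_def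
      have he' : Function.Injective e' := by
        rintro (a | a) (b | b) hab
        · exact congrArg Sum.inl (he (Fin.castSucc_injective n hab))
        · exact absurd hab (Fin.castSucc_lt_last (e a)).ne
        · exact absurd hab.symm (Fin.castSucc_lt_last (e b)).ne
        · exact congrArg Sum.inr (Subsingleton.elim a b)
      set q : Fin k ⊕ Fin 1 ≃ Fin (k + 1) := finSumFinEquiv with hq
      have h1 : 0 < (M.submatrix (e' ∘ q.symm) (e' ∘ q.symm)).det :=
        hP (k + 1) (e' ∘ q.symm) (he'.comp q.symm.injective)
      have h2 : M.submatrix (e' ∘ q.symm) (e' ∘ q.symm)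
          = (M.submatrix e' e').submatrix q.symm q.symm := rfl
      rw [h2, Matrix.det_submatrix_equiv_self] at h1
      -- block structure
      set B : Matrix (Fin k) (Fin 1) ℝ := Matrix.of fun i _ => M (Fin.castSucc (e i)) (Fin.last n)
      set C : Matrix (Fin 1) (Fin k) ℝ := Matrix.of fun _ j => M (Fin.last n) (Fin.castSucc (e j))
      set D : Matrix (Fin 1) (Fin 1) ℝ := Matrix.of fun _ _ => d with hD
      have h3 : M.submatrix e' e' =
          Matrix.fromBlocks (M.submatrix (Fin.castSucc ∘ e) (Fin.castSucc ∘ e)) B C D := by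
        ext (i | i) (j | j) <;> rfl
      letI : Invertible D := ⟨Matrix.of fun _ _ => d⁻¹, by
          ext i j
          simp [Matrix.mul_apply, Fin.sum_univ_one, hD, inv_mul_cancel₀ hd.ne',
            Matrix.one_apply, Subsingleton.elim i j], by
          ext i j
          simp [Matrix.mul_apply, Fin.sum_univ_one, hD, mul_inv_cancel₀ hd.ne',
            Matrix.one_apply, Subsingleton.elim i j]⟩
      rw [h3, Matrix.det_fromBlocks₂₂] at h1
      have hDdet : D.det = d := Matrix.det_fin_one D
      have h4 : M.submatrix (Fin.castSucc ∘ e) (Fin.castSucc ∘ e) - B * ⅟D * C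
          = A'.submatrix e e := by
        ext i j
        simp only [Matrix.mul_apply, Fin.sum_univ_one, Matrix.sub_apply,
          Matrix.submatrix_apply, hA'app, Function.comp_apply]
        rfl
      rw [hDdet, h4] at h1
      nlinarith
    obtain ⟨y, hy_pos, hAy⟩ := ih A' hZ' hSchur
    -- choose epsilon
    set f : Fin n → ℝ := fun i =>
      A'.mulVec y i / (1 + |M (Fin.castSucc i) (Fin.last n)|) with hf
    set F : Finset ℝ := insert 1 (Finset.univ.image f) with hF
    have hFne : F.Nonempty := ⟨1, Finset.mem_insert_self 1 _⟩
    set ε : ℝ := F.min' hFne with hε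
    have hεpos : 0 < ε := by
      apply (Finset.lt_min'_iff F hFne).mpr
      intro v hv
      rcases Finset.mem_insert.mp hv with h | h
      · simp [h]
      · obtain ⟨i, _, hi⟩ := Finset.mem_image.mp h
        rw [← hi]
        exact div_pos (hAy i) (by positivity)
    have hεle : ∀ i, ε ≤ f i := fun i =>
      Finset.min'_le F _ (Finset.mem_insert_of_mem (Finset.mem_image_of_mem f (Finset.mem_univ i)))
    -- construct x
    set s : ℝ := ∑ j : Fin n, M (Fin.last n) j.castSucc * y j with hs_def
    have hs : s ≤ 0 := by
      apply Finset.sum_nonpos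
      intro j _
      exact mul_nonpos_of_nonpos_of_nonneg
        (hZ _ _ (Fin.castSucc_lt_last j).ne.symm) (hy_pos j).le
    set t : ℝ := (-s) / d + ε with ht_def
    have ht : 0 < t := by
      have h0 : 0 ≤ (-s) / d := div_nonneg (by linarith) hd.le
      rw [ht_def]
      linarith
    refine ⟨Fin.snoc y t, ?_, ?_⟩
    · intro i
      refine Fin.lastCases ?_ ?_ i
      · simpa using ht
      · intro i; simpa using hy_pos i
    · intro i
      have hmv : ∀ i : Fin (n + 1),
          M.mulVec (Fin.snoc y t) i
            = ∑ j : Fin n, M i j.castSucc * y j + M i (Fin.last n) * t := by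
        intro i
        rw [Matrix.mulVec, dotProduct, Fin.sum_univ_castSucc]
        simp
      refine Fin.lastCases ?_ ?_ i
      · rw [hmv]
        have : ∑ j : Fin n, M (Fin.last n) j.castSucc * y j + M (Fin.last n) (Fin.last n) * t
            = d * ε := by
          rw [← hs_def, ← hd_def, ht_def]
          field_simp
          ring
        rw [this]
        positivity
      · intro i
        rw [hmv]
        set b : ℝ := M (Fin.castSucc i) (Fin.last n) with hb
        have hble : b ≤ 0 := hZ _ _ (Fin.castSucc_lt_last i).ne
        have hkey : ∑ j : Fin n, M (Fin.castSucc i) j.castSucc * y j + b * t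
            = A'.mulVec y i + ε * b := by
          rw [ht_def, Matrix.mulVec, dotProduct]
          have : ∀ j : Fin n, A' i j * y j
              = M (Fin.castSucc i) j.castSucc * y j - b * d⁻¹ * (M (Fin.last n) j.castSucc * y j) := by
            intro j; rw [hA'app, hb]; ring
          rw [Finset.sum_congr rfl (fun j _ => this j), Finset.sum_sub_distrib, ← Finset.mul_sum,
            ← hs_def]
          field_simp
          ring
        rw [hkey]
        have h1 : ε ≤ A'.mulVec y i / (1 + |b|) := hεle i
        have h2 : 0 < 1 + |b| := by positivity
        have h3 : ε * (1 + |b|) ≤ A'.mulVec y i := (le_div_iff₀ h2).mp h1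
        have h4 : |b| = -b := abs_of_nonpos hble
        nlinarith

theorem kMatrix_stochastic_form {n : ℕ} (M : Matrix (Fin n) (Fin n) ℝ)
    (hZ : IsZMat M) (hP : IsPMat M) :
    ∃ (l h : Fin n → ℝ) (γ : ℝ) (S : Matrix (Fin n) (Fin n) ℝ),
      (∀ i, 0 < l i) ∧ (∀ i, 0 < h i) ∧ 0 ≤ γ ∧ γ < 1 ∧
      (∀ i j, 0 ≤ S i j) ∧ (S.mulVec (fun _ => 1) = fun _ => 1) ∧
      diagonal l * M * diagonal h = 1 - γ • S := by
  classical
  rcases Nat.eq_zero_or_pos n with hn | hn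
  · subst hn
    refine ⟨fun _ => 1, fun _ => 1, 0, 1, fun i => i.elim0, fun i => i.elim0, le_refl 0,
      one_pos, fun i => i.elim0, ?_, ?_⟩
    · funext i; exact i.elim0
    · ext i j; exact i.elim0
  · haveI : Nonempty (Fin n) := ⟨⟨0, hn⟩⟩
    obtain ⟨x, hx_pos, hw⟩ := exists_pos_mulVec_pos n M hZ (fun k e he => pmat_emb hP e he)
    set w : Fin n → ℝ := M.mulVec x with hw_def
    -- diagonal dominance: w i ≤ M i i * x i
    have hdom : ∀ i, w i ≤ M i i * x i := by
      intro i
      have h1 : ∀ j ∈ Finset.univ, M i j * x j ≤ (if j = i then M i i * x i else 0) := by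
        intro j _
        by_cases hji : j = i
        · subst hji; simp
        · simp only [if_neg hji]
          exact mul_nonpos_of_nonpos_of_nonneg (hZ i j (Ne.symm hji)) (hx_pos j).le
      calc w i = ∑ j, M i j * x j := rfl
        _ ≤ ∑ j, (if j = i then M i i * x i else 0) := Finset.sum_le_sum h1
        _ = M i i * x i := by simp
    set r : Fin n → ℝ := fun i => M i i * x i / w i with hr
    have hr1 : ∀ i, 1 ≤ r i := fun i => (one_le_div (hw i)).mpr (hdom i)
    set R : ℝ := Finset.univ.sup' Finset.univ_nonempty r with hR
    have hrR : ∀ i, r i ≤ R := fun i => Finset.le_sup' r (Finset.mem_univ i)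
    have hR1 : 1 ≤ R := le_trans (hr1 (Classical.arbitrary _)) (hrR _)
    set β : ℝ := (R + 1)⁻¹ with hβ
    have hβpos : 0 < β := inv_pos.mpr (by linarith)
    have hβlt : β < 1 := by
      rw [hβ]
      rw [inv_lt_one_iff₀]
      right; linarith
    set γ : ℝ := 1 - β with hγ
    have hγpos : 0 < γ := by rw [hγ]; linarith
    have hγlt : γ < 1 := by rw [hγ]; linarith
    set l : Fin n → ℝ := fun i => β / w i with hl
    have hl_pos : ∀ i, 0 < l i := fun i => div_pos hβpos (hw i)
    set A : Matrix (Fin n) (Fin n) ℝ := diagonal l * M * diagonal x with hA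
    have hAapp : ∀ i j, A i j = l i * M i j * x j := by
      intro i j
      rw [hA, Matrix.mul_diagonal, Matrix.diagonal_mul]
    have hrowsum : ∀ i, ∑ j, A i j = β := by
      intro i
      have : ∑ j, A i j = l i * ∑ j, M i j * x j := by
        rw [Finset.mul_sum]
        exact Finset.sum_congr rfl fun j _ => by rw [hAapp]; ring
      rw [this]
      have hwi : (∑ j, M i j * x j) = w i := rfl
      rw [hwi, hl]
      exact div_mul_cancel₀ β (hw i).ne'
    have hAdiag : ∀ i, A i i ≤ 1 := by
      intro i
      rw [hAapp, hl]
      have h1 : M i i * x i / w i ≤ R := hrR i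
      have h2 : β / w i * M i i * x i = β * (M i i * x i / w i) := by
        field_simp
      rw [h2]
      calc β * (M i i * x i / w i) ≤ β * R := by
            apply mul_le_mul_of_nonneg_left h1 hβpos.le
        _ ≤ β * (R + 1) := by nlinarith
        _ = 1 := by rw [hβ]; field_simp
    set S : Matrix (Fin n) (Fin n) ℝ := γ⁻¹ • (1 - A) with hS
    refine ⟨l, x, γ, S, hl_pos, hx_pos, hγpos.le, hγlt, ?_, ?_, ?_⟩
    · intro i j
      rw [hS]
      simp only [Matrix.smul_apply, Matrix.sub_apply, smul_eq_mul]
      apply mul_nonneg (inv_nonneg.mpr hγpos.le)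
      by_cases hij : i = j
      · subst hij
        rw [Matrix.one_apply_eq]
        linarith [hAdiag i]
      · rw [Matrix.one_apply_ne hij, hAapp]
        have := mul_nonpos_of_nonpos_of_nonneg (hZ i j hij) (hx_pos j).le
        nlinarith [hl_pos i, mul_nonpos_of_nonpos_of_nonneg
          (mul_nonpos_of_nonpos_of_nonneg (mul_nonpos_of_nonpos_of_nonneg (hZ i j hij) (hx_pos j).le) (hl_pos i).le) (le_refl 0)]
    · funext i
      rw [Matrix.mulVec, dotProduct]
      simp only [mul_one]
      have h1 : ∑ j, S i j = γ⁻¹ * (1 - β) := by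
        rw [hS]
        simp only [Matrix.smul_apply, Matrix.sub_apply, smul_eq_mul]
        rw [← Finset.mul_sum, Finset.sum_sub_distrib, hrowsum i]
        congr 1
        simp [Matrix.one_apply]
      rw [h1, ← hγ]
      exact inv_mul_cancel₀ hγpos.ne'
    · rw [hS, smul_smul, mul_inv_cancel₀ hγpos.ne', one_smul, sub_sub_cancel, hA]
end

section
/- Let M ∈ ℝ^{n×n} be a hidden Z-matrix with witness (X, Y, r, s), i.e., X and Y are Z-matrices with MX = Y and Xᵀr + Yᵀs > 0 for some nonnegative vectors r, s. Then X is nonsingular. -/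
open Matrix

lemma zmat_mulVec_nonpos {n : ℕ} (A : Matrix (Fin n) (Fin n) ℝ) (hA : IsZMat A)
    (u : Fin n → ℝ) (hu : ∀ j, 0 ≤ u j) (i : Fin n) (hui : u i = 0) :
    A.mulVec u i ≤ 0 := by
  unfold Matrix.mulVec dotProduct
  apply Finset.sum_nonpos
  intro j _
  by_cases hj : j = i
  · subst hj; simp [hui]
  · exact mul_nonpos_of_nonpos_of_nonneg (hA i j (fun h => hj h.symm)) (hu j)

lemma zmat_key {n : ℕ} (A : Matrix (Fin n) (Fin n) ℝ) (hA : IsZMat A)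
    (v : Fin n → ℝ) (hv : A.mulVec v = 0) (i : Fin n) :
    A.mulVec (fun j => max (v j) 0) i ≤ 0 := by
  by_cases h : v i ≤ 0
  · exact zmat_mulVec_nonpos A hA _ (fun j => le_max_right _ _) i (max_eq_right h)
  · push_neg at h
    have hvp : (fun j => max (v j) 0) = v + (fun j => max (-(v j)) 0) := by
      funext j
      rcases le_total (v j) 0 with hj | hj
      · simp [max_eq_right hj, max_eq_left (neg_nonneg.mpr hj)]
      · simp [max_eq_left hj, max_eq_right (neg_nonpos.mpr hj)]
    rw [hvp, Matrix.mulVec_add, hv]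
    simp only [Pi.add_apply, Pi.zero_apply, zero_add]
    exact zmat_mulVec_nonpos A hA _ (fun j => le_max_right _ _) i
      (max_eq_right (neg_nonpos.mpr h.le))

theorem hiddenZ_witness_X_nonsingular {n : ℕ}
    (M X Y : Matrix (Fin n) (Fin n) ℝ) (r s : Fin n → ℝ)
    (hX : IsZMat X) (hY : IsZMat Y) (hMX : M * X = Y)
    (hr : ∀ i, 0 ≤ r i) (hs : ∀ i, 0 ≤ s i)
    (hpos : ∀ j, 0 < (Xᵀ.mulVec r + Yᵀ.mulVec s) j) :
    IsUnit X.det := by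
  rw [isUnit_iff_ne_zero]
  intro hdet
  obtain ⟨v, hv0, hXv⟩ := Matrix.exists_mulVec_eq_zero_iff.mpr hdet
  have hYv : Y.mulVec v = 0 := by
    rw [← hMX, ← Matrix.mulVec_mulVec, hXv, Matrix.mulVec_zero]
  set vp : Fin n → ℝ := fun j => max (v j) 0 with hvp
  set vn : Fin n → ℝ := fun j => max (-(v j)) 0 with hvn
  have hvpn : ∀ j, 0 ≤ vp j := fun j => le_max_right _ _
  have hvnn : ∀ j, 0 ≤ vn j := fun j => le_max_right _ _
  have hXneg : X.mulVec (-v) = 0 := by rw [Matrix.mulVec_neg, hXv, neg_zero]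
  have hYneg : Y.mulVec (-v) = 0 := by rw [Matrix.mulVec_neg, hYv, neg_zero]
  -- the main summation argument
  have main : ∀ u : Fin n → ℝ, (∀ j, 0 ≤ u j) →
      (∀ i, X.mulVec u i ≤ 0) → (∀ i, Y.mulVec u i ≤ 0) → ∀ j, u j = 0 := by
    intro u hu hXu hYu
    have hsum : (Xᵀ.mulVec r + Yᵀ.mulVec s) ⬝ᵥ u ≤ 0 := by
      have h1 : Xᵀ.mulVec r ⬝ᵥ u = r ⬝ᵥ X.mulVec u := by
        rw [Matrix.mulVec_transpose, Matrix.dotProduct_mulVec]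
      have h2 : Yᵀ.mulVec s ⬝ᵥ u = s ⬝ᵥ Y.mulVec u := by
        rw [Matrix.mulVec_transpose, Matrix.dotProduct_mulVec]
      rw [add_dotProduct, h1, h2]
      have hr1 : r ⬝ᵥ X.mulVec u ≤ 0 := Finset.sum_nonpos fun i _ =>
        mul_nonpos_of_nonneg_of_nonpos (hr i) (hXu i)
      have hs1 : s ⬝ᵥ Y.mulVec u ≤ 0 := Finset.sum_nonpos fun i _ =>
        mul_nonpos_of_nonneg_of_nonpos (hs i) (hYu i)
      linarith
    have hterms : ∀ j ∈ Finset.univ, (0:ℝ) ≤ (Xᵀ.mulVec r + Yᵀ.mulVec s) j * u j :=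
      fun j _ => mul_nonneg (hpos j).le (hu j)
    have hsum' : ∑ j, (Xᵀ.mulVec r + Yᵀ.mulVec s) j * u j = 0 := by
      have h0 : (0:ℝ) ≤ ∑ j, (Xᵀ.mulVec r + Yᵀ.mulVec s) j * u j :=
        Finset.sum_nonneg hterms
      have h1 : ∑ j, (Xᵀ.mulVec r + Yᵀ.mulVec s) j * u j ≤ 0 := hsum
      linarith
    have hzero : ∀ j ∈ Finset.univ, (Xᵀ.mulVec r + Yᵀ.mulVec s) j * u j = 0 :=
      (Finset.sum_eq_zero_iff_of_nonneg hterms).mp hsum'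
    intro j
    have := hzero j (Finset.mem_univ j)
    rcases mul_eq_zero.mp this with h | h
    · exact absurd h (ne_of_gt (hpos j))
    · exact h
  have hvpz : ∀ j, vp j = 0 :=
    main vp hvpn (zmat_key X hX v hXv) (zmat_key Y hY v hYv)
  have hvnz : ∀ j, vn j = 0 := by
    have hX' : ∀ i, X.mulVec vn i ≤ 0 := by
      have := zmat_key X hX (-v) hXneg
      simpa [hvn] using this
    have hY' : ∀ i, Y.mulVec vn i ≤ 0 := by
      have := zmat_key Y hY (-v) hYneg
      simpa [hvn] using this
    exact main vn hvnn hX' hY'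
  apply hv0
  funext j
  have h1 := hvpz j
  have h2 := hvnz j
  simp only [hvp, hvn] at h1 h2
  have : v j ≤ 0 := by
    by_contra h; push_neg at h
    rw [max_eq_left h.le] at h1; linarith
  have : -(v j) ≤ 0 := by
    by_contra h; push_neg at h
    rw [max_eq_left h.le] at h2; linarith
  simp only [Pi.zero_apply]
  linarith
end

section
/- Let M ∈ ℝ^{n×n}. Suppose there exist Z-matrices X, Y ∈ ℝ^{n×n} with MX = Y, X𝟙 > 0 and Y𝟙 > 0 (so X and Y are K-matrices). Then M is a P-matrix. -/
open Matrix

/-!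
A K-matrix has positive determinant: the Z-matrices `A` with `A 𝟙 > 0` form a convex set
containing `1` on which the determinant never vanishes (they are strictly diagonally dominant).

Given `S`, let `N` agree with `M` on the rows in `S` and with `1` on the others. Then `det N` is
the principal minor of `M` on `S`, and `N X` takes its rows in `S` from `Y = M X` and the others
from `X`, so it is again a Z-matrix with positive row sums. Hence `det N * det X = det (N X) > 0`
with `det X > 0`.
-/

namespace Matrix

/-- Z-matrices `A` with `A 𝟙 > 0`: the K-matrices for which `𝟙` is a witness. -/
def posRowSumZMatrices (ι : Type*) [Fintype ι] : Set (Matrix ι ι ℝ) :=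
  {A | (∀ i j, i ≠ j → A i j ≤ 0) ∧ ∀ i, 0 < ∑ j, A i j}

variable {ι : Type*} [Fintype ι]

theorem convex_posRowSumZMatrices : Convex ℝ (posRowSumZMatrices ι) := by
  intro A ⟨hAoff, hAsum⟩ B ⟨hBoff, hBsum⟩ a b ha hb hab
  refine ⟨fun i j hij => ?_, fun i => ?_⟩
  · exact convex_Iic (0 : ℝ) (hAoff i j hij) (hBoff i j hij) ha hb hab
  · simpa [Finset.sum_add_distrib, Finset.mul_sum] using
      convex_Ioi (0 : ℝ) (hAsum i) (hBsum i) ha hb hab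

def rowIte (p : ι → Prop) [DecidablePred p] (A B : Matrix ι ι ℝ) : Matrix ι ι ℝ :=
  of fun i => if p i then A i else B i

section rowIte

variable (p : ι → Prop) [DecidablePred p]

theorem rowIte_mul (A B X : Matrix ι ι ℝ) :
    rowIte p A B * X = rowIte p (A * X) (B * X) := by
  ext i j
  by_cases h : p i <;> simp [rowIte, mul_apply, h]

theorem rowIte_mem_posRowSumZMatrices {A B : Matrix ι ι ℝ} (hA : A ∈ posRowSumZMatrices ι)
    (hB : B ∈ posRowSumZMatrices ι) : rowIte p A B ∈ posRowSumZMatrices ι := by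
  refine ⟨fun i j hij => ?_, fun i => ?_⟩ <;> by_cases h : p i <;>
    simp only [rowIte, of_apply, h, if_true, if_false]
  exacts [hA.1 i j hij, hB.1 i j hij, hA.2 i, hB.2 i]

theorem det_rowIte_one [DecidableEq ι] [Fintype {i // p i}] (M : Matrix ι ι ℝ) :
    (rowIte p M 1).det = (M.submatrix (Subtype.val : {i // p i} → ι) Subtype.val).det := by
  rw [twoBlockTriangular_det _ p fun i hi j hj => by
    simp [rowIte, hi, one_apply_ne (show i ≠ j by rintro rfl; exact hi hj)]]
  have hS : toSquareBlockProp (rowIte p M 1) p = M.submatrix Subtype.val Subtype.val := by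
    ext i j
    simp [toSquareBlockProp, toBlock, rowIte, i.2]
  have hSc : toSquareBlockProp (rowIte p M 1) (fun i => ¬p i) = 1 := by
    ext i j
    simp [toSquareBlockProp, toBlock, rowIte, i.2, one_apply, Subtype.ext_iff]
  rw [hS, hSc, det_one, mul_one]
  -- the two sides differ only in the `Fintype` instance on the subtype
  convert rfl

end rowIte

variable [DecidableEq ι]

theorem one_mem_posRowSumZMatrices : (1 : Matrix ι ι ℝ) ∈ posRowSumZMatrices ι :=
  ⟨fun _ _ hij => (one_apply_ne hij).le, fun i => by simp [one_apply]⟩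

theorem sum_norm_offDiag_lt_norm_diag_of_mem_posRowSumZMatrices
    {A : Matrix ι ι ℝ} (hA : A ∈ posRowSumZMatrices ι) (k : ι) :
    ∑ j ∈ Finset.univ.erase k, ‖A k j‖ < ‖A k k‖ := by
  obtain ⟨hoff, hsum⟩ := hA
  have hnorm : ∑ j ∈ Finset.univ.erase k, ‖A k j‖ = -∑ j ∈ Finset.univ.erase k, A k j := by
    rw [← Finset.sum_neg_distrib]
    refine Finset.sum_congr rfl fun j hj => ?_
    rw [Real.norm_of_nonpos (hoff k j (Finset.ne_of_mem_erase hj).symm)]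
  have hsplit := Finset.add_sum_erase Finset.univ (A k) (Finset.mem_univ k)
  have hoff_nonneg : 0 ≤ ∑ j ∈ Finset.univ.erase k, ‖A k j‖ := by positivity
  rw [Real.norm_of_nonneg (by linarith [hsum k])]
  linarith [hsum k]

theorem det_ne_zero_of_mem_posRowSumZMatrices {A : Matrix ι ι ℝ}
    (hA : A ∈ posRowSumZMatrices ι) : A.det ≠ 0 :=
  det_ne_zero_of_sum_row_lt_diag (sum_norm_offDiag_lt_norm_diag_of_mem_posRowSumZMatrices hA)

theorem det_pos_of_mem_posRowSumZMatrices {A : Matrix ι ι ℝ}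
    (hA : A ∈ posRowSumZMatrices ι) : 0 < A.det := by
  by_contra! hle
  obtain ⟨B, hB, hdetB⟩ := convex_posRowSumZMatrices.isPreconnected.intermediate_value
    hA one_mem_posRowSumZMatrices continuous_id.matrix_det.continuousOn ⟨hle, by simp⟩
  exact det_ne_zero_of_mem_posRowSumZMatrices hB hdetB

end Matrix

theorem proper_hiddenK_witness_isP {n : ℕ}
    (M X Y : Matrix (Fin n) (Fin n) ℝ)
    (hX : IsZMat X) (hY : IsZMat Y) (hMX : M * X = Y)
    (hXrow : ∀ i, 0 < X.mulVec (fun _ => 1) i)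
    (hYrow : ∀ i, 0 < Y.mulVec (fun _ => 1) i) :
    IsPMat M := by
  have hXK : X ∈ posRowSumZMatrices (Fin n) := ⟨hX, by simpa [mulVec, dotProduct] using hXrow⟩
  have hYK : Y ∈ posRowSumZMatrices (Fin n) := ⟨hY, by simpa [mulVec, dotProduct] using hYrow⟩
  intro S
  have hprod : (rowIte (· ∈ S) M 1).det * X.det = (rowIte (· ∈ S) Y X).det := by
    rw [← det_mul, rowIte_mul, hMX, one_mul]
  rw [← det_rowIte_one (· ∈ S)]
  exact pos_of_mul_pos_left (hprod ▸ det_pos_of_mem_posRowSumZMatrices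
    (rowIte_mem_posRowSumZMatrices _ hYK hXK)) (det_pos_of_mem_posRowSumZMatrices hXK).le
end

section
/- Let M ∈ ℝ^{n×n} be a hidden K-matrix with proper witness (X, Y), i.e., X, Y are Z-matrices with MX = Y, X𝟙 > 0 and Y𝟙 > 0. Then there exist positive diagonal matrices L, H such that L M H has proper hidden K-witness (H⁻¹X, LY) where both H⁻¹X and LY are K-matrices with all row sums equal to some common positive constant. -/
open Finset


open Matrix

lemma det_ne_zero_of_Z_rowsum {m : Type*} [Fintype m] [DecidableEq m]
    (A : Matrix m m ℝ) (hZ : ∀ i j, i ≠ j → A i j ≤ 0)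
    (hrs : ∀ i, 0 < ∑ j, A i j) : A.det ≠ 0 := by
  intro hdet
  obtain ⟨v, hv0, hv⟩ := (Matrix.exists_mulVec_eq_zero_iff).2 hdet
  have : Nonempty m := by
    by_contra h
    exact hv0 (funext fun i => absurd ⟨i⟩ h)
  obtain ⟨i, -, hi⟩ := Finset.exists_max_image Finset.univ (fun j => |v j|) ⟨Classical.arbitrary m, mem_univ _⟩
  have hvi : v i ≠ 0 := by
    intro h
    apply hv0
    funext j
    have := hi j (mem_univ j)
    rw [h, abs_zero] at this
    exact abs_nonpos_iff.mp this
  set w : m → ℝ := if 0 < v i then v else -v with hw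
  have hwi : w i = |v i| := by
    rcases lt_trichotomy (v i) 0 with h | h | h
    · simp [hw, not_lt.mpr h.le, abs_of_neg h, h.not_gt]
    · exact absurd h hvi
    · simp [hw, h, abs_of_pos h]
  have hwle : ∀ j, w j ≤ w i := by
    intro j
    rw [hwi]
    calc w j ≤ |v j| := by
          by_cases hvi' : 0 < v i <;> simp [hw, hvi', neg_le_abs, le_abs_self]
      _ ≤ |v i| := hi j (mem_univ j)
  have hwipos : 0 < w i := by rw [hwi]; exact abs_pos.mpr hvi
  have hmw : A.mulVec w = 0 := by
    by_cases hvi' : 0 < v i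
    · simpa [hw, hvi']
    · simp only [hw, if_neg hvi', Matrix.mulVec_neg, hv, neg_zero]
  have h0 : (0:ℝ) = ∑ j, A i j * w j := by
    have := congrFun hmw i
    simpa [Matrix.mulVec, dotProduct] using this.symm
  have hge : ∑ j, A i j * w j ≥ ∑ j, A i j * w i := by
    apply Finset.sum_le_sum
    intro j _
    by_cases hji : j = i
    · subst hji; exact le_refl _
    · exact mul_le_mul_of_nonpos_left (hwle j) (hZ i j (Ne.symm hji))
  have : (0:ℝ) < ∑ j, A i j * w i := by
    rw [← Finset.sum_mul]
    exact mul_pos (hrs i) hwipos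
  linarith

lemma det_pos_of_Z_rowsum {m : Type*} [Fintype m] [DecidableEq m]
    (A : Matrix m m ℝ) (hZ : ∀ i j, i ≠ j → A i j ≤ 0)
    (hrs : ∀ i, 0 < ∑ j, A i j) : 0 < A.det := by
  set B : ℝ → Matrix m m ℝ := fun t => Matrix.of fun i j => if i = j then A i j else t * A i j
    with hB
  have hdiag : ∀ i, 0 < A i i := by
    intro i
    have h1 : ∑ j ∈ univ \ {i}, A i j ≤ 0 :=
      Finset.sum_nonpos fun j hj => hZ i j fun h => (Finset.mem_sdiff.mp hj).2 (Finset.mem_singleton.mpr h.symm)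
    have h2 := hrs i
    rw [← Finset.sum_sdiff (Finset.subset_univ {i}), Finset.sum_singleton] at h2
    linarith
  have hBZ : ∀ t, 0 ≤ t → ∀ i j, i ≠ j → B t i j ≤ 0 := by
    intro t ht i j hij
    simp only [hB, Matrix.of_apply, if_neg hij]
    exact mul_nonpos_of_nonneg_of_nonpos ht (hZ i j hij)
  have hBrs : ∀ t ∈ Set.Icc (0:ℝ) 1, ∀ i, 0 < ∑ j, B t i j := by
    intro t ht i
    have : ∑ j, A i j ≤ ∑ j, B t i j := by
      apply Finset.sum_le_sum
      intro j _
      by_cases hij : i = j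
      · simp [hB, hij]
      · simp only [hB, Matrix.of_apply, if_neg hij]
        nlinarith [hZ i j hij, ht.1, ht.2]
    linarith [hrs i]
  have hne : ∀ t ∈ Set.Icc (0:ℝ) 1, (B t).det ≠ 0 := fun t ht =>
    det_ne_zero_of_Z_rowsum (B t) (hBZ t ht.1) (hBrs t ht)
  have hcont : Continuous fun t => (B t).det := by
    apply Continuous.matrix_det
    exact continuous_matrix fun i j => by
      by_cases hij : i = j <;> simp only [hB, Matrix.of_apply, if_pos, if_neg, hij] <;>
        [exact continuous_const; exact (continuous_id.mul continuous_const)]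
  have hB0 : (B 0).det = ∏ i, A i i := by
    have : B 0 = Matrix.diagonal fun i => A i i := by
      ext i j
      by_cases hij : i = j <;> simp [hB, Matrix.diagonal, hij, Ne.symm]
    rw [this, Matrix.det_diagonal]
  have hB1 : B 1 = A := by
    ext i j; by_cases hij : i = j <;> simp [hB, hij]
  have hpos0 : 0 < (B 0).det := by
    rw [hB0]; exact Finset.prod_pos fun i _ => hdiag i
  by_contra hle
  push_neg at hle
  have hlt1 : (B 1).det < 0 := lt_of_le_of_ne (hB1 ▸ hle) (hne 1 ⟨zero_le_one, le_refl 1⟩)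
  have := intermediate_value_Icc' (zero_le_one) (hcont.continuousOn (s := Set.Icc 0 1))
  obtain ⟨t, ht, ht0⟩ := this ⟨hlt1.le, hpos0.le⟩
  exact hne t ht ht0

lemma isPMat_of_Z_rowsum {n : ℕ} (A : Matrix (Fin n) (Fin n) ℝ)
    (hZ : ∀ i j, i ≠ j → A i j ≤ 0) (hrs : ∀ i, 0 < ∑ j, A i j) : IsPMat A := by
  intro S
  apply det_pos_of_Z_rowsum
  · intro i j hij
    exact hZ i.val j.val fun h => hij (Subtype.ext h)
  · intro i
    have h1 : ∑ j : {x // x ∈ S}, A i.val j.val = ∑ j ∈ S, A i.val j :=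
      Finset.sum_coe_sort S (fun j => A i.val j)
    have h2 : ∑ j ∈ Finset.univ \ S, A i.val j ≤ 0 := by
      apply Finset.sum_nonpos
      intro j hj
      refine hZ i.val j fun h => ?_
      exact (Finset.mem_sdiff.mp hj).2 (h ▸ i.2)
    have h3 := hrs i.val
    rw [← Finset.sum_sdiff (Finset.subset_univ S)] at h3
    show 0 < ∑ j : {x // x ∈ S}, A i.val j.val
    rw [h1]
    linarith

theorem hiddenK_stochastic_form_witness {n : ℕ}
    (M X Y : Matrix (Fin n) (Fin n) ℝ)
    (hX : IsZMat X) (hY : IsZMat Y) (hMX : M * X = Y)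
    (hXrow : ∀ i, 0 < X.mulVec (fun _ => 1) i)
    (hYrow : ∀ i, 0 < Y.mulVec (fun _ => 1) i) :
    ∃ (l h : Fin n → ℝ) (c : ℝ), (∀ i, 0 < l i) ∧ (∀ i, 0 < h i) ∧ 0 < c ∧
      (diagonal l * M * diagonal h) * (diagonal (fun i => (h i)⁻¹) * X)
        = diagonal l * Y ∧
      IsZMat (diagonal (fun i => (h i)⁻¹) * X) ∧
      IsPMat (diagonal (fun i => (h i)⁻¹) * X) ∧
      IsZMat (diagonal l * Y) ∧ IsPMat (diagonal l * Y) ∧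
      (∀ i, (diagonal (fun i => (h i)⁻¹) * X).mulVec (fun _ => 1) i = c) ∧
      (∀ i, (diagonal l * Y).mulVec (fun _ => 1) i = c) := by
  have hmv : ∀ (A : Matrix (Fin n) (Fin n) ℝ) i, A.mulVec (fun _ => 1) i = ∑ j, A i j := by
    intro A i; simp [Matrix.mulVec, dotProduct]
  set h : Fin n → ℝ := fun i => X.mulVec (fun _ => 1) i with hh
  set l : Fin n → ℝ := fun i => (Y.mulVec (fun _ => 1) i)⁻¹ with hl
  have hhpos : ∀ i, 0 < h i := hXrow
  have hlpos : ∀ i, 0 < l i := fun i => inv_pos.mpr (hYrow i)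
  have hDX : ∀ i j, (diagonal (fun i => (h i)⁻¹) * X) i j = (h i)⁻¹ * X i j := by
    intro i j; rw [Matrix.diagonal_mul]
  have hLY : ∀ i j, (diagonal l * Y) i j = l i * Y i j := by
    intro i j; rw [Matrix.diagonal_mul]
  have hrsX : ∀ i, (diagonal (fun i => (h i)⁻¹) * X).mulVec (fun _ => 1) i = 1 := by
    intro i
    rw [hmv]
    simp only [hDX]
    rw [← Finset.mul_sum, ← hmv X i]
    exact inv_mul_cancel₀ (hhpos i).ne'
  have hrsY : ∀ i, (diagonal l * Y).mulVec (fun _ => 1) i = 1 := by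
    intro i
    rw [hmv]
    simp only [hLY]
    rw [← Finset.mul_sum, ← hmv Y i]
    exact inv_mul_cancel₀ (hYrow i).ne'
  have hZX : ∀ i j, i ≠ j → (diagonal (fun i => (h i)⁻¹) * X) i j ≤ 0 := by
    intro i j hij
    rw [hDX]
    exact mul_nonpos_of_nonneg_of_nonpos (inv_pos.mpr (hhpos i)).le (hX i j hij)
  have hZY : ∀ i j, i ≠ j → (diagonal l * Y) i j ≤ 0 := by
    intro i j hij
    rw [hLY]
    exact mul_nonpos_of_nonneg_of_nonpos (hlpos i).le (hY i j hij)
  refine ⟨l, h, 1, hlpos, hhpos, one_pos, ?_, hZX, ?_, hZY, ?_, hrsX, hrsY⟩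
  · calc diagonal l * M * diagonal h * (diagonal (fun i => (h i)⁻¹) * X)
        = diagonal l * M * (diagonal h * diagonal (fun i => (h i)⁻¹)) * X := by
          simp only [mul_assoc]
      _ = diagonal l * M * X := by
          rw [Matrix.diagonal_mul_diagonal]
          simp only [fun i => mul_inv_cancel₀ (hhpos i).ne']
          rw [Matrix.diagonal_one, mul_one]
      _ = diagonal l * Y := by rw [mul_assoc, hMX]
  · apply isPMat_of_Z_rowsum _ hZX
    intro i
    rw [← hmv, hrsX i]; exact one_pos
  · apply isPMat_of_Z_rowsum _ hZY
    intro i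
    rw [← hmv, hrsY i]; exact one_pos
end

section
/- Let A = [Mᵀ | I] be the n×2n matrix formed by an n×n matrix Mᵀ and the identity, and let p ∈ ℝⁿ. Suppose every choice of one column from each complementary pair {column j of Mᵀ, column j of I} yields a nonsingular n×n matrix C with C⁻¹p > 0. Then the determinants of all such representative submatrices are positive; in particular Mᵀ (and hence M) is a P-matrix. -/
open Matrix

/-- The representative submatrix of `[Mᵀ | I]` determined by a choice `ε`:
column `j` is column `j` of `Mᵀ` if `ε j` is true, and column `j` of the identity
otherwise. -/
def repSub {n : ℕ} (M : Matrix (Fin n) (Fin n) ℝ) (ε : Fin n → Bool) :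
    Matrix (Fin n) (Fin n) ℝ :=
  Matrix.of fun i j => if ε j then Mᵀ i j else (1 : Matrix (Fin n) (Fin n) ℝ) i j

lemma det_mul_sol {n : ℕ} (A : Matrix (Fin n) (Fin n) ℝ) (p : Fin n → ℝ)
    (h : IsUnit A.det) (j : Fin n) :
    A.det * (A⁻¹ *ᵥ p) j = (A.updateCol j p).det := by
  have := congrFun (A.det_smul_inv_mulVec_eq_cramer p h) j
  simpa [Matrix.cramer_apply] using this

lemma repSub_update {n : ℕ} (M : Matrix (Fin n) (Fin n) ℝ) (ε : Fin n → Bool)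
    (j : Fin n) (b : Bool) (p : Fin n → ℝ) :
    (repSub M (Function.update ε j b)).updateCol j p
      = (repSub M ε).updateCol j p := by
  ext i k
  by_cases hk : k = j
  · simp [hk, Matrix.updateCol_apply]
  · simp [Matrix.updateCol_apply, hk, repSub, Function.update_of_ne hk]

theorem feasible_grid_implies_pMatrix {n : ℕ} (M : Matrix (Fin n) (Fin n) ℝ)
    (p : Fin n → ℝ)
    (hfeas : ∀ ε : Fin n → Bool, IsUnit (repSub M ε).det ∧
      ∀ i, 0 < ((repSub M ε)⁻¹.mulVec p) i) :
    (∀ ε : Fin n → Bool, 0 < (repSub M ε).det) ∧ IsPMat M := by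
  -- sign-sharing between adjacent ε
  have key : ∀ (ε : Fin n → Bool) (j : Fin n),
      0 < (repSub M (Function.update ε j false)).det → 0 < (repSub M ε).det := by
    intro ε j hpos
    set ε' := Function.update ε j false
    obtain ⟨hu, hx⟩ := hfeas ε
    obtain ⟨hu', hx'⟩ := hfeas ε'
    have h1 := det_mul_sol (repSub M ε) p hu j
    have h2 := det_mul_sol (repSub M ε') p hu' j
    have hcol : (repSub M ε').updateCol j p = (repSub M ε).updateCol j p := by
      have := repSub_update M ε j false p
      simpa [ε'] using this
    have heq : (repSub M ε).det * ((repSub M ε)⁻¹ *ᵥ p) j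
        = (repSub M ε').det * ((repSub M ε')⁻¹ *ᵥ p) j := by
      rw [h1, h2, hcol]
    nlinarith [hx j, hx' j, hpos]
  -- all dets positive, by induction on number of true entries
  have main : ∀ (k : ℕ) (ε : Fin n → Bool),
      (Finset.univ.filter (fun j => ε j = true)).card ≤ k → 0 < (repSub M ε).det := by
    intro k
    induction k with
    | zero =>
      intro ε hc
      have hε : ∀ j, ε j = false := by
        intro j
        by_contra h
        have : ε j = true := by cases hεj : ε j with
          | false => exact absurd hεj h
          | true => rfl
        have : j ∈ Finset.univ.filter (fun j => ε j = true) := by simp [this]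
        have := Finset.card_pos.mpr ⟨j, this⟩
        omega
      have : repSub M ε = 1 := by
        ext i j; simp [repSub, hε]
      rw [this]; simp
    | succ k ih =>
      intro ε hc
      by_cases hall : ∀ j, ε j = false
      · have : repSub M ε = 1 := by ext i j; simp [repSub, hall]
        rw [this]; simp
      · push_neg at hall
        obtain ⟨j, hj⟩ := hall
        have hjt : ε j = true := by cases h : ε j with
          | false => exact absurd h hj
          | true => rfl
        apply key ε j
        apply ih
        have hsub : Finset.univ.filter (fun i => Function.update ε j false i = true)
            = (Finset.univ.filter (fun i => ε i = true)).erase j := by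
          ext i
          by_cases hij : i = j
          · subst hij; simp [Function.update_self]
          · simp [Function.update_of_ne hij, hij]
        rw [hsub, Finset.card_erase_of_mem (by simp [hjt])]
        omega
  have hall : ∀ ε : Fin n → Bool, 0 < (repSub M ε).det := fun ε => main _ ε le_rfl
  refine ⟨hall, ?_⟩
  -- P-matrix part
  intro S
  classical
  set ε : Fin n → Bool := fun j => decide (j ∈ S)
  have hpos := hall ε
  set e : {i // i ∈ S} ⊕ {i // i ∉ S} ≃ Fin n := Equiv.sumCompl (· ∈ S)
  have hdet : (repSub M ε).det = ((repSub M ε).submatrix e e).det :=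
    (Matrix.det_submatrix_equiv_self e _).symm
  have hblock : (repSub M ε).submatrix e e
      = Matrix.fromBlocks
          (Mᵀ.submatrix (Subtype.val : {i // i ∈ S} → Fin n) Subtype.val)
          0
          (Mᵀ.submatrix (Subtype.val : {i // i ∉ S} → Fin n) Subtype.val)
          1 := by
    ext i j
    cases i with
    | inl i => cases j with
      | inl j => simp [repSub, ε, e, j.2]
      | inr j =>
        have hne : (i : Fin n) ≠ (j : Fin n) := fun h => j.2 (h ▸ i.2)
        simp [repSub, ε, e, j.2, Matrix.one_apply, hne]
    | inr i => cases j with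
      | inl j => simp [repSub, ε, e, j.2]
      | inr j =>
        simp [repSub, ε, e, j.2, Matrix.one_apply, Subtype.ext_iff]
  have htr : (Mᵀ.submatrix (Subtype.val : {i // i ∈ S} → Fin n) Subtype.val)
      = (M.submatrix (Subtype.val : {i // i ∈ S} → Fin n) Subtype.val)ᵀ := by
    ext i j; simp [Matrix.transpose_apply]
  rw [hdet, hblock, Matrix.det_fromBlocks_zero₁₂, htr, Matrix.det_transpose,
    Matrix.det_one, mul_one] at hpos
  exact hpos
end

section
/- Let P be an n×n row-stochastic matrix with minimum diagonal entry f = min_j p_jj, let γ ∈ [0,1), κ = γ(1−f), λ = 1 − γf. Then (1/λ)(I − γP) = I − (κ/λ)·S, where S = (γ/κ)(P − fI) is row-stochastic (S ≥ 0, S𝟙 = 𝟙), and κ/λ ∈ [0, γ] with κ/λ < γ whenever f > 0. -/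
/-!
Subtracting `f • 1` from `P` removes a common self-loop mass `f` from every state; what is left,
rescaled by `1 / (1 - f)`, is again row-stochastic. Since `1 - γ P = (1 - γ f) • 1 - γ (P - f • 1)`,
dividing by `λ = 1 - γ f` exhibits `I - γ P` as `λ • (I - (κ / λ) S)` with the smaller discount
`κ / λ = γ (1 - f) / (1 - γ f) ≤ γ`.
-/

open Matrix

namespace Matrix

variable {ι R : Type*} [DecidableEq ι]

lemma sub_smul_one_apply_nonneg [Ring R] [PartialOrder R] [IsOrderedAddMonoid R]
    {P : Matrix ι ι R} {f : R} (hP : ∀ i j, 0 ≤ P i j) (hf : ∀ j, f ≤ P j j) (i j : ι) :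
    0 ≤ (P - f • (1 : Matrix ι ι R)) i j := by
  rcases eq_or_ne i j with rfl | hij
  · simpa using hf i
  · simpa [one_apply_ne hij] using hP i j

lemma sub_smul_one_mulVec_one [Fintype ι] [CommRing R] {P : Matrix ι ι R} (f : R)
    (hP : P *ᵥ (fun _ => 1) = fun _ => 1) :
    (P - f • (1 : Matrix ι ι R)) *ᵥ (fun _ => 1) = fun _ => 1 - f := by
  rw [sub_mulVec, smul_mulVec, one_mulVec, hP]
  ext
  simp

lemma one_div_smul_one_sub_smul_eq [Field R] (P : Matrix ι ι R) {γ f κ lam : R}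
    (hκ : κ ≠ 0) (hlam0 : lam ≠ 0) (hlam : lam = 1 - γ * f) :
    (1 / lam) • ((1 : Matrix ι ι R) - γ • P)
      = 1 - (κ / lam) • ((γ / κ) • (P - f • (1 : Matrix ι ι R))) := by
  match_scalars
  · field_simp
    linear_combination -hlam
  · field_simp

end Matrix

section ReducedDiscount

variable {γ f : ℝ}

lemma one_sub_mul_pos (hγ1 : γ < 1) (hκ : 0 < γ * (1 - f)) : 0 < 1 - γ * f := by
  linarith

lemma mul_one_sub_div_one_sub_mul_le (hγ0 : 0 ≤ γ) (hγ1 : γ < 1) (hf0 : 0 ≤ f)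
    (hκ : 0 < γ * (1 - f)) : γ * (1 - f) / (1 - γ * f) ≤ γ := by
  rw [div_le_iff₀ (one_sub_mul_pos hγ1 hκ)]
  nlinarith [mul_nonneg (mul_nonneg hγ0 hf0) (sub_nonneg.mpr hγ1.le)]

lemma mul_one_sub_div_one_sub_mul_lt (hγ0 : 0 ≤ γ) (hγ1 : γ < 1) (hf0 : 0 < f)
    (hκ : 0 < γ * (1 - f)) : γ * (1 - f) / (1 - γ * f) < γ := by
  have hγpos : 0 < γ := hγ0.lt_of_ne (by rintro rfl; simp at hκ)
  rw [div_lt_iff₀ (one_sub_mul_pos hγ1 hκ)]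
  nlinarith [mul_pos (mul_pos hγpos hf0) (sub_pos.mpr hγ1)]

end ReducedDiscount

theorem discount_factor_reduction_general {n : ℕ} (P : Matrix (Fin n) (Fin n) ℝ)
    (hP : ∀ i j, 0 ≤ P i j) (hProw : P.mulVec (fun _ => 1) = fun _ => 1)
    (γ f κ lam : ℝ) (hγ0 : 0 ≤ γ) (hγ1 : γ < 1)
    (hf : ∀ j, f ≤ P j j) (hfmin : ∃ j, P j j = f)
    (hκ : κ = γ * (1 - f)) (hκpos : 0 < κ) (hlam : lam = 1 - γ * f) :
    ((1 / lam) • ((1 : Matrix (Fin n) (Fin n) ℝ) - γ • P)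
        = 1 - (κ / lam) • ((γ / κ) • (P - f • (1 : Matrix (Fin n) (Fin n) ℝ)))) ∧
    (∀ i j, 0 ≤ ((γ / κ) • (P - f • (1 : Matrix (Fin n) (Fin n) ℝ))) i j) ∧
    (((γ / κ) • (P - f • (1 : Matrix (Fin n) (Fin n) ℝ))).mulVec (fun _ => 1)
        = fun _ => 1) ∧
    0 ≤ κ / lam ∧ κ / lam ≤ γ ∧ (0 < f → κ / lam < γ) := by
  have hf0 : 0 ≤ f := hfmin.elim fun j hj => hj ▸ hP j j
  have hlampos : 0 < lam := hlam ▸ one_sub_mul_pos hγ1 (hκ ▸ hκpos)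
  refine ⟨one_div_smul_one_sub_smul_eq P hκpos.ne' hlampos.ne' hlam,
    fun i j => mul_nonneg (div_nonneg hγ0 hκpos.le) (sub_smul_one_apply_nonneg hP hf i j),
    ?_, div_nonneg hκpos.le hlampos.le, ?_, fun hfpos => ?_⟩
  · rw [smul_mulVec, sub_smul_one_mulVec_one f hProw]
    ext
    simp only [Pi.smul_apply, smul_eq_mul]
    rw [div_mul_eq_mul_div, ← hκ, div_self hκpos.ne']
  · subst hκ hlam
    exact mul_one_sub_div_one_sub_mul_le hγ0 hγ1 hf0 hκpos
  · subst hκ hlam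
    exact mul_one_sub_div_one_sub_mul_lt hγ0 hγ1 hfpos hκpos

theorem discount_factor_reduction {n : ℕ} (P : Matrix (Fin n) (Fin n) ℝ)
    (hP : ∀ i j, 0 ≤ P i j) (hProw : P.mulVec (fun _ => 1) = fun _ => 1)
    (γ f κ lam : ℝ) (hγ0 : 0 ≤ γ) (hγ1 : γ < 1)
    (hf : ∀ j, f ≤ P j j) (hfmin : ∃ j, P j j = f) (hf1 : f < 1)
    (hκ : κ = γ * (1 - f)) (hκpos : 0 < κ) (hlam : lam = 1 - γ * f) :
    ((1 / lam) • ((1 : Matrix (Fin n) (Fin n) ℝ) - γ • P)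
        = 1 - (κ / lam) • ((γ / κ) • (P - f • (1 : Matrix (Fin n) (Fin n) ℝ)))) ∧
    (∀ i j, 0 ≤ ((γ / κ) • (P - f • (1 : Matrix (Fin n) (Fin n) ℝ))) i j) ∧
    (((γ / κ) • (P - f • (1 : Matrix (Fin n) (Fin n) ℝ))).mulVec (fun _ => 1)
        = fun _ => 1) ∧
    0 ≤ κ / lam ∧ κ / lam ≤ γ ∧ (0 < f → κ / lam < γ) :=
  discount_factor_reduction_general P hP hProw γ f κ lam hγ0 hγ1 hf hfmin hκ hκpos hlam
end

section
/- Let M ∈ ℝ^{n×n} be a K-matrix and q ∈ ℝⁿ. If z* solves the linear program: maximize −pᵀz subject to −Mz ≤ q, z ≥ 0, where p = M⁻ᵀv for some v > 0, then the pair (w*, z*) with w* = q + Mz* satisfies the linear complementarity conditions: w* − Mz* = q, w*, z* ≥ 0, and z*_j · w*_j = 0 for all j. -/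
open Matrix

def PM {ι : Type*} [Fintype ι] [DecidableEq ι] (A : Matrix ι ι ℝ) : Prop :=
  ∀ (m : ℕ) (f : Fin m → ι), Function.Injective f → 0 < (A.submatrix f f).det

lemma PM.sub {ι κ : Type*} [Fintype ι] [DecidableEq ι] [Fintype κ] [DecidableEq κ]
    {A : Matrix ι ι ℝ} (hA : PM A) {g : κ → ι} (hg : Function.Injective g) :
    PM (A.submatrix g g) := fun m f hf => hA m (g ∘ f) (hg.comp hf)

lemma det_schur_step {m : ℕ} (B : Matrix (Fin (m+1)) (Fin (m+1)) ℝ) (hB : B 0 0 ≠ 0) :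
    B.det = B 0 0 * Matrix.det (Matrix.of fun i j : Fin m =>
      B i.succ j.succ - B i.succ 0 * (B 0 0)⁻¹ * B 0 j.succ) := by
  set a : Matrix (Fin 1) (Fin 1) ℝ := Matrix.of fun _ _ => B 0 0 with ha
  set b : Matrix (Fin 1) (Fin m) ℝ := Matrix.of fun _ j => B 0 j.succ with hb
  set c : Matrix (Fin m) (Fin 1) ℝ := Matrix.of fun i _ => B i.succ 0 with hc
  set d : Matrix (Fin m) (Fin m) ℝ := Matrix.of fun i j => B i.succ j.succ with hd
  letI : Invertible a := ⟨Matrix.of fun _ _ => (B 0 0)⁻¹, by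
      ext i j; simp [ha, Matrix.mul_apply, inv_mul_cancel₀ hB, Matrix.one_apply,
        Subsingleton.elim i j], by
      ext i j; simp [ha, Matrix.mul_apply, mul_inv_cancel₀ hB, Matrix.one_apply,
        Subsingleton.elim i j]⟩
  have hinv : (⅟a : Matrix (Fin 1) (Fin 1) ℝ) = Matrix.of fun _ _ => (B 0 0)⁻¹ := rfl
  let e : Fin 1 ⊕ Fin m ≃ Fin (m+1) :=
    { toFun := Sum.elim (fun _ => (0 : Fin (m+1))) Fin.succ
      invFun := fun i => Fin.cases (Sum.inl 0) (fun k => Sum.inr k) i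
      left_inv := by rintro (x | x); · simp [Subsingleton.elim x 0]
                     · simp
      right_inv := by intro i; induction i using Fin.cases <;> simp }
  have hBe : B.submatrix e e = Matrix.fromBlocks a b c d := by
    ext i j
    rcases i with i | i <;> rcases j with j | j <;> rfl
  have h1 : B.det = (Matrix.fromBlocks a b c d).det := by
    rw [← hBe, Matrix.det_submatrix_equiv_self]
  rw [h1, Matrix.det_fromBlocks₁₁]
  congr 1
  · simp [ha, Matrix.det_fin_one]
  · congr 1
    ext i j
    simp [hd, hc, hb, hinv, Matrix.mul_apply, Fin.sum_univ_one]

lemma key_semipos : ∀ (n : ℕ) (A : Matrix (Fin n) (Fin n) ℝ),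
    (∀ i j, i ≠ j → A i j ≤ 0) → PM A →
    ∀ y : Fin n → ℝ, (∀ i, 0 ≤ y i) → (∀ i, A.mulVec y i ≤ 0) → ∀ i, y i = 0 := by
  intro n
  induction n with
  | zero => intro _ _ _ _ _ _ i; exact i.elim0
  | succ n ih =>
    intro A hZ hPM y hy hAy
    have hA00 : 0 < A 0 0 := by
      have h := hPM 1 (fun _ => 0) (fun a b _ => Subsingleton.elim a b)
      rwa [Matrix.det_fin_one] at h
    have hA00' : A 0 0 ≠ 0 := ne_of_gt hA00
    set C : Matrix (Fin n) (Fin n) ℝ := Matrix.of fun i j : Fin n =>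
      A i.succ j.succ - A i.succ 0 * (A 0 0)⁻¹ * A 0 j.succ with hC
    -- Z-property of C
    have hZC : ∀ i j, i ≠ j → C i j ≤ 0 := by
      intro i j hij
      have h1 : A i.succ j.succ ≤ 0 := hZ _ _ (fun h => hij (Fin.succ_injective _ h))
      have h2 : A i.succ 0 ≤ 0 := hZ _ _ (Fin.succ_ne_zero i)
      have h3 : A 0 j.succ ≤ 0 := hZ _ _ (Fin.succ_ne_zero j).symm
      have h4 : 0 ≤ A i.succ 0 * (A 0 0)⁻¹ * A 0 j.succ := by
        have h5 : A i.succ 0 * (A 0 0)⁻¹ ≤ 0 :=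
          mul_nonpos_of_nonpos_of_nonneg h2 (le_of_lt (inv_pos.2 hA00))
        nlinarith [mul_nonneg (neg_nonneg.2 h5) (neg_nonneg.2 h3)]
      simp only [hC, Matrix.of_apply]
      linarith
    -- P-property of C
    have hPMC : PM C := by
      intro m f hf
      set g : Fin (m+1) → Fin (n+1) := Fin.cases 0 (fun k => (f k).succ) with hg
      have hginj : Function.Injective g := by
        intro a b hab
        induction a using Fin.cases with
        | zero =>
          induction b using Fin.cases with
          | zero => rfl
          | succ b => simp [hg] at hab; exact absurd hab.symm (Fin.succ_ne_zero _)
        | succ a =>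
          induction b using Fin.cases with
          | zero => simp [hg] at hab
          | succ b =>
            simp only [hg, Fin.cases_succ] at hab
            exact congrArg Fin.succ (hf (Fin.succ_injective _ hab))
      have hdet := hPM (m+1) g hginj
      set D := A.submatrix g g with hD
      have hD00 : D 0 0 = A 0 0 := by simp [hD, hg]
      have hschur := det_schur_step D (by rw [hD00]; exact hA00')
      rw [hD00] at hschur
      have heq : (Matrix.of fun i j : Fin m =>
          D i.succ j.succ - D i.succ 0 * (A 0 0)⁻¹ * D 0 j.succ) = C.submatrix f f := by
        ext i j
        simp [hD, hg, hC]
      rw [hschur, heq] at hdet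
      rcases mul_pos_iff.mp hdet with h | h
      · exact h.2
      · linarith [h.1]
    -- the reduced vector
    set y' : Fin n → ℝ := fun k => y k.succ with hy'
    have hy'0 : ∀ k, 0 ≤ y' k := fun k => hy _
    have hCy' : ∀ i, C.mulVec y' i ≤ 0 := by
      intro i
      set t := A i.succ 0 * (A 0 0)⁻¹ with ht
      have htn : t ≤ 0 :=
        mul_nonpos_of_nonpos_of_nonneg (hZ _ _ (Fin.succ_ne_zero i)) (le_of_lt (inv_pos.2 hA00))
      have hcancel : t * A 0 0 = A i.succ 0 := by
        rw [ht, mul_assoc, inv_mul_cancel₀ hA00', mul_one]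
      have hexp : C.mulVec y' i = A.mulVec y i.succ - t * A.mulVec y 0
          + (t * A 0 0 - A i.succ 0) * y 0 := by
        simp only [Matrix.mulVec, dotProduct, hC, hy', Matrix.of_apply, ht,
          Fin.sum_univ_succ, sub_mul, Finset.sum_sub_distrib, Finset.mul_sum]
        have hs : ∑ x : Fin n, A i.succ 0 * (A 0 0)⁻¹ * A 0 x.succ * y x.succ
            = A i.succ 0 * (A 0 0)⁻¹ * ∑ x : Fin n, A 0 x.succ * y x.succ := by
          rw [Finset.mul_sum]
          exact Finset.sum_congr rfl fun x _ => by ring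
        rw [hs]
        ring
      rw [hcancel, sub_self, zero_mul, add_zero] at hexp
      have h1 : 0 ≤ t * A.mulVec y 0 := by nlinarith [mul_nonneg (neg_nonneg.2 htn) (neg_nonneg.2 (hAy 0))]
      have h2 := hAy i.succ
      linarith [hexp.le, hexp.ge]
    have hzero := ih C hZC hPMC y' hy'0 hCy'
    have hy0 : y 0 = 0 := by
      have h := hAy 0
      rw [Matrix.mulVec, dotProduct, Fin.sum_univ_succ] at h
      have hrest : ∀ k : Fin n, A 0 k.succ * y k.succ = 0 := by
        intro k; rw [show y k.succ = 0 from hzero k, mul_zero]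
      rw [Finset.sum_congr rfl (fun k _ => hrest k), Finset.sum_const_zero, add_zero] at h
      nlinarith [hy 0, hA00]
    intro i
    induction i using Fin.cases with
    | zero => exact hy0
    | succ i => exact hzero i

lemma isPMat_pm {n : ℕ} {M : Matrix (Fin n) (Fin n) ℝ} (hP : ∀ S : Finset (Fin n),
    0 < (M.submatrix (Subtype.val : {i // i ∈ S} → Fin n) Subtype.val).det) : PM M := by
  intro m f hf
  set S : Finset (Fin n) := Finset.image f Finset.univ with hS
  have hcard : Fintype.card {i // i ∈ S} = m := by
    rw [Fintype.card_coe, hS, Finset.card_image_of_injective _ hf, Finset.card_univ,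
      Fintype.card_fin]
  have hbij : Function.Bijective (fun k : Fin m => (⟨f k, by simp [hS]⟩ : {i // i ∈ S})) := by
    rw [Fintype.bijective_iff_injective_and_card]
    exact ⟨fun a b hab => hf (congrArg Subtype.val hab), by simp [hcard]⟩
  let e : Fin m ≃ {i // i ∈ S} := Equiv.ofBijective _ hbij
  have : M.submatrix f f =
      (M.submatrix (Subtype.val : {i // i ∈ S} → Fin n) Subtype.val).submatrix e e := rfl
  rw [this, Matrix.det_submatrix_equiv_self]
  exact hP S

lemma pos_sol {n : ℕ} (A : Matrix (Fin n) (Fin n) ℝ)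
    (hZ : ∀ i j, i ≠ j → A i j ≤ 0) (hPM : PM A)
    (p v : Fin n → ℝ) (hAp : A.mulVec p = v) (hv : ∀ i, 0 < v i) : ∀ j, 0 < p j := by
  by_contra hcon
  push_neg at hcon
  obtain ⟨j0, hj0⟩ := hcon
  set S : Finset (Fin n) := Finset.filter (fun j => p j ≤ 0) Finset.univ with hS
  have hj0S : j0 ∈ S := by simp [hS, hj0]
  set m := S.card with hm
  set e := S.orderIsoOfFin (rfl : S.card = m) with he
  set f : Fin m → Fin n := fun k => (e k : Fin n) with hf
  have hfinj : Function.Injective f := fun a b hab =>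
    e.injective (Subtype.val_injective hab)
  have hfS : ∀ k, f k ∈ S := fun k => (e k).2
  -- strict positivity of the restricted sums
  have hstrict : ∀ i : Fin m, 0 < ∑ k : Fin m, A (f i) (f k) * p (f k) := by
    intro i
    have hv' : 0 < v (f i) := hv _
    have hsum : v (f i) = ∑ j : Fin n, A (f i) j * p j := by
      rw [← hAp]; rfl
    have hsplit : ∑ j : Fin n, A (f i) j * p j
        = ∑ j ∈ S, A (f i) j * p j + ∑ j ∈ Sᶜ, A (f i) j * p j := by
      rw [hS]
      rw [← Finset.sum_filter_add_sum_filter_not Finset.univ (fun j => p j ≤ 0)]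
      congr 1
      apply Finset.sum_congr _ (fun _ _ => rfl)
      simp [Finset.compl_filter]
    have hneg : ∑ j ∈ Sᶜ, A (f i) j * p j ≤ 0 := by
      apply Finset.sum_nonpos
      intro j hj
      have hjS : j ∉ S := Finset.mem_compl.mp hj
      have hpj : 0 < p j := lt_of_not_ge fun h => hjS (by simp [hS]; exact h)
      have hne : f i ≠ j := fun h => hjS (h ▸ hfS i)
      exact mul_nonpos_of_nonpos_of_nonneg (hZ _ _ hne) (le_of_lt hpj)
    have hbij : ∑ j ∈ S, A (f i) j * p j = ∑ k : Fin m, A (f i) (f k) * p (f k) := by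
      rw [← Finset.sum_coe_sort S (fun j => A (f i) j * p j)]
      exact (Fintype.sum_equiv e.toEquiv _ _ (fun k => rfl)).symm
    rw [hsum, hsplit, hbij] at hv'
    linarith
  -- apply the key lemma to the restricted system
  set B := A.submatrix f f with hB
  have hZB : ∀ i j : Fin m, i ≠ j → B i j ≤ 0 := fun i j hij =>
    hZ _ _ (fun h => hij (hfinj h))
  have hPMB : PM B := hPM.sub hfinj
  set y : Fin m → ℝ := fun k => -(p (f k)) with hy
  have hy0 : ∀ k, 0 ≤ y k := by
    intro k
    have : p (f k) ≤ 0 := by have := hfS k; simp [hS] at this; exact this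
    simp [hy]; linarith
  have hBy : ∀ i, B.mulVec y i ≤ 0 := by
    intro i
    have : B.mulVec y i = -∑ k : Fin m, A (f i) (f k) * p (f k) := by
      simp [hB, hy, Matrix.mulVec, dotProduct, Finset.sum_neg_distrib]
    rw [this]
    linarith [hstrict i]
  have hzero := key_semipos m B hZB hPMB y hy0 hBy
  -- contradiction: p vanishes on S, but restricted sum is positive
  obtain ⟨i0, hi0⟩ : ∃ i0 : Fin m, f i0 = j0 := ⟨e.symm ⟨j0, hj0S⟩, by simp [hf]⟩
  have : ∑ k : Fin m, A (f i0) (f k) * p (f k) = 0 := by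
    apply Finset.sum_eq_zero
    intro k _
    have : p (f k) = 0 := by have := hzero k; simp [hy] at this; linarith
    rw [this, mul_zero]
  linarith [hstrict i0]

theorem lp_solution_solves_kLCP {n : ℕ}
    (M : Matrix (Fin n) (Fin n) ℝ) (hZ : IsZMat M) (hP : IsPMat M)
    (q v p : Fin n → ℝ) (hv : ∀ i, 0 < v i) (hpv : p = (Mᵀ)⁻¹.mulVec v)
    (zs : Fin n → ℝ)
    (hfeas : (∀ i, 0 ≤ (q + M.mulVec zs) i) ∧ (∀ i, 0 ≤ zs i))
    (hopt : ∀ z : Fin n → ℝ,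
      ((∀ i, 0 ≤ (q + M.mulVec z) i) ∧ (∀ i, 0 ≤ z i)) →
        -(p ⬝ᵥ z) ≤ -(p ⬝ᵥ zs)) :
    (q + M.mulVec zs) - M.mulVec zs = q ∧
    (∀ i, 0 ≤ (q + M.mulVec zs) i) ∧ (∀ i, 0 ≤ zs i) ∧
    ∀ j, zs j * (q + M.mulVec zs) j = 0 := by
  obtain ⟨hw, hz⟩ := hfeas
  refine ⟨add_sub_cancel_right q _, hw, hz, ?_⟩
  -- transpose is a K-matrix
  have hZA : ∀ i j : Fin n, i ≠ j → Mᵀ i j ≤ 0 := fun i j h => hZ j i (Ne.symm h)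
  have hPT : IsPMat Mᵀ := by
    intro S
    have h : (Mᵀ).submatrix (Subtype.val : {i // i ∈ S} → Fin n) Subtype.val
        = (M.submatrix (Subtype.val : {i // i ∈ S} → Fin n) Subtype.val)ᵀ := rfl
    rw [h, Matrix.det_transpose]
    exact hP S
  have hPMA : PM Mᵀ := isPMat_pm hPT
  have hdet : 0 < (Mᵀ).det := by
    have h := hPMA n id Function.injective_id
    rwa [Matrix.submatrix_id_id] at h
  have hunit : IsUnit (Mᵀ).det := isUnit_iff_ne_zero.2 (ne_of_gt hdet)
  have hAp : (Mᵀ).mulVec p = v := by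
    rw [hpv, Matrix.mulVec_mulVec, Matrix.mul_nonsing_inv _ hunit, Matrix.one_mulVec]
  have hp : ∀ j, 0 < p j := pos_sol Mᵀ hZA hPMA p v hAp hv
  have hMdiag : ∀ j, 0 < M j j := by
    intro j
    have h := hPMA 1 (fun _ => j) (fun a b _ => Subsingleton.elim a b)
    rw [Matrix.det_fin_one] at h
    exact h
  -- complementarity
  intro j
  by_contra hne
  have h1 : zs j ≠ 0 := fun h => hne (by rw [h, zero_mul])
  have h2 : (q + M.mulVec zs) j ≠ 0 := fun h => hne (by rw [h, mul_zero])
  have hzj : 0 < zs j := lt_of_le_of_ne (hz j) (Ne.symm h1)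
  have hwj : 0 < (q + M.mulVec zs) j := lt_of_le_of_ne (hw j) (Ne.symm h2)
  set ε := min (zs j) ((q + M.mulVec zs) j / M j j) with hε
  have hεpos : 0 < ε := lt_min hzj (div_pos hwj (hMdiag j))
  set z' : Fin n → ℝ := zs - ε • (Pi.single j 1 : Fin n → ℝ) with hz'
  have hMz' : M.mulVec z' = fun i => M.mulVec zs i - ε * M i j := by
    rw [hz', Matrix.mulVec_sub, Matrix.mulVec_smul, Matrix.mulVec_single]
    ext i
    simp [mul_comm]
  have feas1 : ∀ i, 0 ≤ (q + M.mulVec z') i := by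
    intro i
    rw [hMz']
    simp only [Pi.add_apply]
    by_cases hij : i = j
    · subst hij
      have hle : ε ≤ (q + M.mulVec zs) i / M i i := min_le_right _ _
      rw [le_div_iff₀ (hMdiag i)] at hle
      have := hw i
      simp only [Pi.add_apply] at hle this ⊢
      linarith
    · have hMij : M i j ≤ 0 := hZ i j hij
      have := hw i
      simp only [Pi.add_apply] at this ⊢
      nlinarith
  have feas2 : ∀ k, 0 ≤ z' k := by
    intro k
    rw [hz']
    by_cases hkj : k = j
    · subst hkj
      have hle : ε ≤ zs k := min_le_left _ _
      simp [Pi.single_apply]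
      linarith
    · simp [Pi.single_apply, hkj]
      exact hz k
  have hobj : p ⬝ᵥ z' = p ⬝ᵥ zs - ε * p j := by
    rw [hz', dotProduct_sub, dotProduct_smul, dotProduct_single]
    simp only [smul_eq_mul, mul_one]
  have hcontr := hopt z' ⟨feas1, feas2⟩
  rw [hobj] at hcontr
  nlinarith [mul_pos hεpos (hp j)]
end
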